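/- arXiv:1104.4259 — 4 statements merged into one kernel-verified Lean document; each statement's English description precedes it below -/
import Mathlib

section
/- Let a, b, c be positive real numbers with a + b + c = 1. Then 0 ≤ ab + bc + ca − abc ≤ 8/27, with the upper bound attained if and only if a = b = c = 1/3. -/
lemma schur_aux (a b c : ℝ) (ha : 0 ≤ a) (hb : 0 ≤ b) (hc : 0 ≤ c) :
    0 ≤ a*(a-b)*(a-c) + b*(b-a)*(b-c) + c*(c-a)*(c-b) := by
  rcases le_total a b with h1 | h1 <;> rcases le_total b c with h2 | h2 <;>
    rcases le_total a c with h3 | h3 <;>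
    nlinarith [mul_nonneg ha (sq_nonneg (a-b)), mul_nonneg hb (sq_nonneg (b-c)),
      mul_nonneg hc (sq_nonneg (c-a)), mul_nonneg ha (sq_nonneg (a-c)),
      mul_nonneg hb (sq_nonneg (a-b)), mul_nonneg hc (sq_nonneg (b-c))]

theorem weighted_pi_imo1984 (a b c : ℝ) (ha : 0 < a) (hb : 0 < b) (hc : 0 < c)
    (habc : a + b + c = 1) :
    0 ≤ a * b + b * c + c * a - a * b * c ∧
    a * b + b * c + c * a - a * b * c ≤ 8 / 27 ∧
    (a * b + b * c + c * a - a * b * c = 8 / 27 ↔ a = 1 / 3 ∧ b = 1 / 3 ∧ c = 1 / 3) := by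
  have hS := schur_aux a b c ha.le hb.le hc.le
  have key : 8/27 - (a * b + b * c + c * a - a * b * c) =
      (1/9) * (a*(a-b)*(a-c) + b*(b-a)*(b-c) + c*(c-a)*(c-b)) +
      (5/54) * ((a-b)^2 + (b-c)^2 + (c-a)^2) := by
    have hc' : c = 1 - a - b := by linarith
    subst hc'; ring
  refine ⟨by nlinarith [mul_pos ha hb, mul_pos hb hc, mul_pos ha hc,
      mul_pos (mul_pos ha hb) hc], ?_, ?_, ?_⟩
  · nlinarith [sq_nonneg (a-b), sq_nonneg (b-c), sq_nonneg (c-a)]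
  · intro h
    have hT : (a-b)^2 + (b-c)^2 + (c-a)^2 = 0 := by nlinarith [sq_nonneg (a-b), sq_nonneg (b-c), sq_nonneg (c-a)]
    have hab : a = b := by nlinarith [sq_nonneg (a-b), sq_nonneg (b-c), sq_nonneg (c-a)]
    have hbc : b = c := by nlinarith [sq_nonneg (a-b), sq_nonneg (b-c), sq_nonneg (c-a)]
    refine ⟨by linarith, by linarith, by linarith⟩
  · rintro ⟨h1, h2, h3⟩
    subst h1 h2 h3; norm_num
end

section
/- Let n ≥ 2 and let a_1 ≥ a_2 ≥ … ≥ a_n ≥ X > 0 be real numbers with a_1 + a_2 + … + a_n = Y. Then the sum of squares a_1² + a_2² + … + a_n² ≤ (Y − X)² + X², with equality if and only if n = 2 and a_1 = Y − X, a_2 = X. -/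
theorem sum_sq_le_of_antitone_ge (n : ℕ) (hn : 2 ≤ n) (a : Fin n → ℝ) (X Y : ℝ)
    (hX : 0 < X) (hanti : Antitone a) (hge : ∀ i, X ≤ a i)
    (hsum : ∑ i, a i = Y) :
    ∑ i, (a i) ^ 2 ≤ (Y - X) ^ 2 + X ^ 2 ∧
    (∑ i, (a i) ^ 2 = (Y - X) ^ 2 + X ^ 2 ↔
      n = 2 ∧ a ⟨0, by omega⟩ = Y - X ∧ a ⟨1, by omega⟩ = X) := by
  have h2 : (2:ℝ) ≤ (n:ℝ) := by exact_mod_cast hn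
  have hY : (n:ℝ) * X ≤ Y := by
    rw [← hsum]
    calc (n:ℝ) * X = ∑ _i : Fin n, X := by
          simp [Finset.sum_const, mul_comm]
      _ ≤ ∑ i, a i := Finset.sum_le_sum (fun i _ => hge i)
  have hne : (⟨0, by omega⟩ : Fin n) ≠ ⟨1, by omega⟩ := by
    simp [Fin.ext_iff]
  have hpair : a ⟨0, by omega⟩ + a ⟨1, by omega⟩ ≤ Y := by
    rw [← hsum, ← Finset.sum_pair hne]
    exact Finset.sum_le_sum_of_subset_of_nonneg (Finset.subset_univ _)
      (fun j _ _ => le_of_lt (lt_of_lt_of_le hX (hge j)))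
  have hub : ∀ i, a i ≤ Y - X := by
    intro i
    have h0 : a i ≤ a ⟨0, by omega⟩ := hanti (by simp [Fin.le_def])
    have := hge ⟨1, by omega⟩
    linarith
  have hpt : ∀ i, a i ^ 2 ≤ Y * a i - X * (Y - X) := by
    intro i
    nlinarith [hge i, hub i]
  have hsum2 : ∑ i, a i ^ 2 ≤ Y * Y - (n:ℝ) * (X * (Y - X)) := by
    calc ∑ i, a i ^ 2 ≤ ∑ i, (Y * a i - X * (Y - X)) :=
          Finset.sum_le_sum (fun i _ => hpt i)
      _ = Y * Y - (n:ℝ) * (X * (Y - X)) := by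
          rw [Finset.sum_sub_distrib, ← Finset.mul_sum, hsum]
          simp [Finset.sum_const, mul_comm]
  have hYX : X ≤ Y - X := by nlinarith
  have hmain : ∑ i, a i ^ 2 ≤ (Y - X) ^ 2 + X ^ 2 := by
    nlinarith [hsum2, mul_nonneg (sub_nonneg.mpr h2)
      (mul_nonneg hX.le (by linarith : (0:ℝ) ≤ Y - X))]
  refine ⟨hmain, ?_, ?_⟩
  · intro heq
    have hn2 : n = 2 := by
      have hx : 0 < X * (Y - X) := mul_pos hX (lt_of_lt_of_le hX hYX)
      have hle2 : (n:ℝ) ≤ 2 := by nlinarith [hsum2, heq]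
      have : n ≤ 2 := by exact_mod_cast hle2
      omega
    subst hn2
    refine ⟨rfl, ?_⟩
    show a 0 = Y - X ∧ a 1 = X
    rw [Fin.sum_univ_two] at hsum heq
    have hle : a 1 ≤ a 0 := hanti (by decide)
    have hg0 := hge 0
    have hg1 := hge 1
    have hfac : (a 0 - X) * (a 1 - X) = 0 := by nlinarith
    rcases mul_eq_zero.mp hfac with h | h
    · exact ⟨by linarith, by linarith⟩
    · exact ⟨by linarith, by linarith⟩
  · rintro ⟨hn2, h0, h1⟩
    subst hn2
    rw [Fin.sum_univ_two]
    have e0 : a 0 = Y - X := h0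
    have e1 : a 1 = X := h1
    rw [e0, e1]
end

section
/- Let a_1, a_2, …, a_n be nonnegative real numbers with a_1 + a_2 + … + a_n = 1. Then the sum over all pairs i < j of a_i a_j (a_i + a_j)(2 − a_i − a_j) is at most 8/27. -/
lemma two_mul_offdiag_sum {n : ℕ} (f : Fin n → Fin n → ℝ)
    (hsymm : ∀ i j, f i j = f j i) :
    2 * ∑ i, ∑ j, (if i < j then f i j else 0)
      = (∑ i, ∑ j, f i j) - ∑ i, f i i := by
  have h1 : ∑ i, ∑ j, (if j < i then f i j else 0)
      = ∑ i, ∑ j, (if i < j then f i j else 0) := by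
    rw [Finset.sum_comm]
    exact Finset.sum_congr rfl fun i _ => Finset.sum_congr rfl fun j _ => by rw [hsymm]
  have h2 : ∑ i, ∑ j : Fin n, (if i = j then f i j else 0) = ∑ i, f i i := by
    refine Finset.sum_congr rfl fun i _ => ?_
    simp
  have h3 : ∀ i j : Fin n, f i j
      = (if i < j then f i j else 0) + (if j < i then f i j else 0)
        + (if i = j then f i j else 0) := by
    intro i j
    rcases lt_trichotomy i j with h | h | h
    · simp [h, h.ne, asymm h]
    · subst h; simp
    · simp [h, h.ne', asymm h]
  have h4 : ∑ i, ∑ j, f i j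
      = (∑ i, ∑ j, (if i < j then f i j else 0))
        + (∑ i, ∑ j, (if j < i then f i j else 0))
        + (∑ i, ∑ j : Fin n, (if i = j then f i j else 0)) := by
    simp_rw [← Finset.sum_add_distrib]
    exact Finset.sum_congr rfl fun i _ => Finset.sum_congr rfl fun j _ => h3 i j
  rw [h4, h1, h2]
  ring

theorem pairSum_le_eight_div_27 (n : ℕ) (a : Fin n → ℝ)
    (hpos : ∀ i, 0 ≤ a i) (hsum : ∑ i, a i = 1) :
    ∑ i, ∑ j, (if i < j then a i * a j * (a i + a j) * (2 - a i - a j) else 0)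
      ≤ 8 / 27 := by
  classical
  set p2 := ∑ i, (a i)^2 with hp2
  set p3 := ∑ i, (a i)^3 with hp3
  set p4 := ∑ i, (a i)^4 with hp4
  by_cases hc : ∀ i, a i ≤ 5/6
  · -- all small : use the power-sum identity and tangent line trick
    have hid : 2 * ∑ i, ∑ j, (if i < j then a i * a j * (a i + a j) * (2 - a i - a j) else 0)
        = (4*p2 - 2*p3 - 2*p2^2) - (4*p3 - 4*p4) := by
      rw [two_mul_offdiag_sum _ (fun i j => by ring)]
      have hinner : ∀ i : Fin n, ∑ j, a i * a j * (a i + a j) * (2 - a i - a j)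
          = 2*(a i)^2 + 2*(a i)*p2 - (a i)^3 - 2*(a i)^2*p2 - (a i)*p3 := by
        intro i
        have h : ∀ j : Fin n, a i * a j * (a i + a j) * (2 - a i - a j)
            = (2*(a i)^2 - (a i)^3) * (a j) + (2*(a i) - 2*(a i)^2)*(a j)^2
              + (-(a i))*(a j)^3 := fun j => by ring
        simp_rw [h, Finset.sum_add_distrib, ← Finset.mul_sum, hsum]
        ring
      have hfull : ∑ i, ∑ j, a i * a j * (a i + a j) * (2 - a i - a j)
          = 4*p2 - 2*p3 - 2*p2^2 := by
        have h : ∀ i : Fin n, ∑ j, a i * a j * (a i + a j) * (2 - a i - a j)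
            = (2*p2 - p3) * (a i) + (2 - 2*p2)*(a i)^2 + (-1)*(a i)^3 := by
          intro i; rw [hinner i]; ring
        simp_rw [h, Finset.sum_add_distrib, ← Finset.mul_sum, hsum]
        ring
      have hdiag : ∑ i, a i * a i * (a i + a i) * (2 - a i - a i) = 4*p3 - 4*p4 := by
        have h : ∀ i : Fin n, a i * a i * (a i + a i) * (2 - a i - a i)
            = 4*(a i)^3 + (-4)*(a i)^4 := fun i => by ring
        simp_rw [h, Finset.sum_add_distrib, ← Finset.mul_sum]
        ring
      rw [hfull, hdiag]
    have hpoint : ∀ i : Fin n, 2*(a i)^4 - 3*(a i)^3 + (4/3)*(a i)^2 - (5/27)*(a i) ≤ 0 := by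
      intro i
      have h1 := hpos i
      have h2 := hc i
      nlinarith [mul_nonneg (mul_nonneg h1 (sq_nonneg (a i - 1/3)))
        (by linarith : (0:ℝ) ≤ 5/6 - a i)]
    have hsumpt : 2*p4 - 3*p3 + (4/3)*p2 - 5/27 ≤ 0 := by
      have h0 : ∑ i, (2*(a i)^4 - 3*(a i)^3 + (4/3)*(a i)^2 - (5/27)*(a i)) ≤ 0 := by
        have := Finset.sum_le_sum (s := Finset.univ) (fun i _ => hpoint i)
        simpa using this
      have heq : ∑ i, (2*(a i)^4 - 3*(a i)^3 + (4/3)*(a i)^2 - (5/27)*(a i))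
          = 2*p4 - 3*p3 + (4/3)*p2 - (5/27)*1 := by
        have h : ∀ i : Fin n, 2*(a i)^4 - 3*(a i)^3 + (4/3)*(a i)^2 - (5/27)*(a i)
            = (-(5/27))*(a i) + (4/3)*(a i)^2 + (-3)*(a i)^3 + 2*(a i)^4 := fun i => by ring
        simp_rw [h, Finset.sum_add_distrib, ← Finset.mul_sum, hsum]
        ring
      rw [heq] at h0
      linarith
    nlinarith [hid, hsumpt, sq_nonneg (p2 - 1/3)]
  · -- some a k > 5/6
    push_neg at hc
    obtain ⟨k, hk⟩ := hc
    have hS : ∑ i, ∑ j, (if i < j then a i * a j * (a i + a j) * (2 - a i - a j) else 0)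
        ≤ ∑ i, ∑ j, (if i < j then a i * a j else 0) := by
      refine Finset.sum_le_sum fun i _ => Finset.sum_le_sum fun j _ => ?_
      split_ifs with h
      · have he : a i * a j - a i * a j * (a i + a j) * (2 - a i - a j)
            = a i * a j * (1 - a i - a j)^2 := by ring
        have hn := mul_nonneg (mul_nonneg (hpos i) (hpos j)) (sq_nonneg (1 - a i - a j))
        linarith
      · exact le_refl _
    have hsq : 2 * ∑ i, ∑ j, (if i < j then a i * a j else 0) = 1 - p2 := by
      rw [two_mul_offdiag_sum _ (fun i j => mul_comm _ _)]
      have hfull2 : ∑ i, ∑ j, a i * a j = 1 := by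
        simp_rw [← Finset.mul_sum, hsum, mul_one, hsum]
      have hdiag2 : ∑ i, a i * a i = p2 :=
        Finset.sum_congr rfl fun i _ => (pow_two (a i)).symm
      rw [hfull2, hdiag2]
    have hp2big : (25:ℝ)/36 ≤ p2 := by
      have h1 : (25:ℝ)/36 ≤ (a k)^2 := by nlinarith [hk]
      have h2 : (a k)^2 ≤ p2 :=
        Finset.single_le_sum (fun i _ => sq_nonneg (a i)) (Finset.mem_univ k)
      linarith
    linarith [hS, hsq, hp2big]
end

section
/- Let a_1 ≥ a_2 ≥ … ≥ a_n ≥ 0 with sum 1 and n ≥ 4. Then F(a_1, …, a_n) ≤ F(a_1, …, a_{n−2}, a_{n−1} + a_n, 0), where F(a_1,…,a_n) = Σ_{i<j} a_i a_j (a_i + a_j)(2 − a_i − a_j). -/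
/-!
In terms of the power sums `p m = ∑ aᵢ ^ m`, `F = 2 p₁ p₂ - p₁ p₃ - p₂² - 2 p₃ + 2 p₄`. Merging
`x = a_{n-1}` and `y = a_n` changes each `p m` by `(x + y) ^ m - x ^ m - y ^ m`, so when `p₁ = 1`
the gain is `x y (4 - 9 s + 8 (x² + x y + y²) - 4 p₂)` with `s = x + y`. The remaining squares
sum to at most `a₁ (1 - s)`, and `a₁ ≤ 1 - s - x` because `a₂ ≥ x`; together with `y ≤ x` this
bounds the bracket below by `s (1 - 2 s) ≥ 0`.
-/

/-- `F(a) = Σ_{i<j} a_i a_j (a_i + a_j)(2 - a_i - a_j)`. -/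
def F {n : ℕ} (a : Fin n → ℝ) : ℝ :=
  ∑ i, ∑ j, (if i < j then a i * a j * (a i + a j) * (2 - a i - a j) else 0)

open Finset

theorem sum_sum_eq_sum_lt_add_sum_lt_add_sum_diag {ι M : Type*} [Fintype ι] [LinearOrder ι]
    [AddCommMonoid M] (g : ι → ι → M) (hg : ∀ i j, g i j = g j i) :
    ∑ i, ∑ j, g i j = (∑ i, ∑ j, if i < j then g i j else 0)
      + (∑ i, ∑ j, if i < j then g i j else 0) + ∑ i, g i i := by
  have split : ∀ i j, g i j = (if i < j then g i j else 0) + (if j < i then g j i else 0)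
      + (if i = j then g i j else 0) := by
    intro i j
    rcases lt_trichotomy i j with h | rfl | h
    · simp [h, h.ne, h.not_gt]
    · simp
    · simp [h, h.ne', h.not_gt, hg i j]
  rw [sum_congr rfl fun i _ => sum_congr rfl fun j _ => split i j]
  simp only [sum_add_distrib, sum_ite_eq, mem_univ, if_true]
  rw [sum_comm (f := fun i j => if j < i then g j i else 0)]

def psum {ι : Type*} [Fintype ι] (a : ι → ℝ) (m : ℕ) : ℝ := ∑ i, a i ^ m

theorem F_eq_psum {n : ℕ} (a : Fin n → ℝ) :
    F a = 2 * psum a 1 * psum a 2 - psum a 1 * psum a 3 - psum a 2 ^ 2 - 2 * psum a 3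
      + 2 * psum a 4 := by
  have hsplit := sum_sum_eq_sum_lt_add_sum_lt_add_sum_diag
    (fun i j => a i * a j * (a i + a j) * (2 - a i - a j)) (fun i j => by ring)
  have hfull : ∑ i, ∑ j, a i * a j * (a i + a j) * (2 - a i - a j)
      = 4 * psum a 1 * psum a 2 - 2 * psum a 1 * psum a 3 - 2 * psum a 2 ^ 2 := by
    have separate : ∀ i j, a i * a j * (a i + a j) * (2 - a i - a j) = 2 * (a i ^ 2 * a j ^ 1)
        + 2 * (a i ^ 1 * a j ^ 2) - a i ^ 3 * a j ^ 1 - 2 * (a i ^ 2 * a j ^ 2) - a i ^ 1 * a j ^ 3 :=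
      fun i j => by ring
    simp only [separate, sum_add_distrib, sum_sub_distrib, ← mul_sum, ← sum_mul, psum]
    ring
  have hdiag : ∑ i, a i * a i * (a i + a i) * (2 - a i - a i) = 4 * psum a 3 - 4 * psum a 4 := by
    simp only [psum, mul_sum, ← sum_sub_distrib]
    exact sum_congr rfl fun i _ => by ring
  rw [F]
  linarith

section Merge

variable {ι : Type*} [Fintype ι] {a b : ι → ℝ} {k l : ι}

theorem psum_of_merge (hkl : k ≠ l) (hbk : b k = a k + a l) (hbl : b l = 0)
    (hb : ∀ i, i ≠ k → i ≠ l → b i = a i) {m : ℕ} (hm : m ≠ 0) :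
    psum b m = psum a m + (a k + a l) ^ m - a k ^ m - a l ^ m := by
  have hdiff : ∑ i, (b i ^ m - a i ^ m) = (b k ^ m - a k ^ m) + (b l ^ m - a l ^ m) :=
    Fintype.sum_eq_add k l hkl fun i ⟨hik, hil⟩ => by rw [hb i hik hil, sub_self]
  rw [sum_sub_distrib, hbk, hbl, zero_pow hm] at hdiff
  rw [psum, psum]
  linarith

theorem psum_two_sub_pair_le_mul {M : ℝ} (hpos : ∀ i, 0 ≤ a i) (hM : ∀ i, a i ≤ M)
    (hkl : k ≠ l) : psum a 2 - a k ^ 2 - a l ^ 2 ≤ M * (∑ i, a i - a k - a l) := by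
  have h := add_le_sum (f := fun i => a i * (M - a i))
    (fun i _ => mul_nonneg (hpos i) (sub_nonneg.2 (hM i))) (mem_univ k) (mem_univ l) hkl
  simp only [mul_sub, sum_sub_distrib, ← sum_mul] at h
  simp only [psum, sq]
  linarith

end Merge

theorem F_sub_F_of_merge {n : ℕ} {a b : Fin n → ℝ} {k l : Fin n} (hkl : k ≠ l)
    (hbk : b k = a k + a l) (hbl : b l = 0) (hb : ∀ i, i ≠ k → i ≠ l → b i = a i)
    (hsum : ∑ i, a i = 1) :
    F b - F a = a k * a l *
      (4 - 9 * (a k + a l) + 8 * (a k ^ 2 + a k * a l + a l ^ 2) - 4 * psum a 2) := by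
  have hp1 : psum a 1 = 1 := by simpa [psum] using hsum
  have merge := fun m (hm : m ≠ 0) => psum_of_merge hkl hbk hbl hb (m := m) hm
  rw [F_eq_psum, F_eq_psum, merge 1 one_ne_zero, merge 2 two_ne_zero, merge 3 three_ne_zero,
    merge 4 four_ne_zero, hp1]
  ring

theorem merge_bracket_nonneg {x y M q : ℝ} (hy : 0 ≤ y) (hyx : y ≤ x) (hxM : x ≤ M)
    (hq : q - x ^ 2 - y ^ 2 ≤ M * (1 - x - y)) (hM : M + x + (x + y) ≤ 1) :
    0 ≤ 4 - 9 * (x + y) + 8 * (x ^ 2 + x * y + y ^ 2) - 4 * q := by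
  have hrest : 0 ≤ 1 - x - y := by linarith
  have hMbound : M * (1 - x - y) ≤ (1 - 3 / 2 * (x + y)) * (1 - x - y) :=
    mul_le_mul_of_nonneg_right (by linarith) hrest
  nlinarith [mul_nonneg (add_nonneg (hy.trans hyx) hy) (by linarith : (0:ℝ) ≤ 1 - 2 * (x + y))]

theorem F_merge_last_two (n : ℕ) (hn : 4 ≤ n) (a : Fin n → ℝ)
    (hanti : Antitone a) (hpos : ∀ i, 0 ≤ a i) (hsum : ∑ i, a i = 1) :
    F a ≤ F (fun i : Fin n =>
      if (i : ℕ) = n - 2 then a i + a ⟨n - 1, by omega⟩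
      else if (i : ℕ) = n - 1 then 0 else a i) := by
  set k : Fin n := ⟨n - 2, by omega⟩
  set l : Fin n := ⟨n - 1, by omega⟩
  set i₀ : Fin n := ⟨0, by omega⟩
  set i₁ : Fin n := ⟨1, by omega⟩
  have hkl : k ≠ l := by simp [k, l, Fin.ext_iff]; omega
  have hfour : a i₀ + a i₁ + a k + a l ≤ 1 := by
    rw [← hsum]
    refine le_trans (le_of_eq ?_) (sum_le_univ_sum_of_nonneg (s := {i₀, i₁, k, l}) hpos)
    rw [sum_insert, sum_insert, sum_pair hkl, add_assoc, add_assoc]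
    all_goals simp [i₀, i₁, k, l, Fin.ext_iff]; omega
  have hlk : a l ≤ a k := hanti (Fin.le_def.2 (by simp [k, l]; omega))
  have hki₀ : a k ≤ a i₀ := hanti (Fin.le_def.2 (Nat.zero_le _))
  have hki₁ : a k ≤ a i₁ := hanti (Fin.le_def.2 (by simp [k, i₁]; omega))
  have hq := psum_two_sub_pair_le_mul hpos
    (fun i => hanti (show i₀ ≤ i from Fin.le_def.2 (Nat.zero_le _))) hkl
  rw [hsum] at hq
  rw [← sub_nonneg, F_sub_F_of_merge hkl (by simp [k]) (by simp [l]; omega)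
    (fun i hik hil => by simp [k, l, Fin.ext_iff] at hik hil ⊢; simp [hik, hil]) hsum]
  exact mul_nonneg (mul_nonneg (hpos k) (hpos l))
    (merge_bracket_nonneg (hpos l) hlk hki₀ hq (by linarith))
end
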